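/- arXiv:math/9805044 — 2 statements merged into one kernel-verified Lean document; each statement's English description precedes it below -/
import Mathlib

section
/- Let R' = k[[t^{n₁},…,t^{n_r}]] ⊆ k[[t]] be a semigroup ring over a field k of characteristic zero. Then every element of the R'-module R'·DR' (the R'-submodule of S·Dt generated by the derivatives of elements of R') is an exact differential, i.e. R'·D(R') = D(R'). -/
open PowerSeries

/-- The formal derivative on `k⟦t⟧` as a `k`-linear map. -/
noncomputable def formalDeriv (k : Type*) [CommRing k] :
    PowerSeries k →ₗ[k] PowerSeries k :=
  (PowerSeries.derivative k).toLinearMap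

/-!
Differentiation lowers exponents by one, so for `a, b` supported on a submonoid `M` of `ℕ`,
the exponents `d` occurring in `a * b'` satisfy `d + 1 ∈ M`. In characteristic zero the
term-by-term antiderivative of such a series is then again supported on `M`.
-/

namespace PowerSeries

section Support

variable {R : Type*} [CommSemiring R]

theorem exists_coeff_ne_zero_of_coeff_mul_ne_zero {f g : R⟦X⟧} {d : ℕ}
    (h : coeff d (f * g) ≠ 0) : ∃ i j, i + j = d ∧ coeff i f ≠ 0 ∧ coeff j g ≠ 0 := by
  rw [coeff_mul] at h
  obtain ⟨⟨i, j⟩, hij, hne⟩ := Finset.exists_ne_zero_of_sum_ne_zero h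
  exact ⟨i, j, Finset.HasAntidiagonal.mem_antidiagonal.mp hij, left_ne_zero_of_mul hne,
    right_ne_zero_of_mul hne⟩

theorem coeff_succ_ne_zero_of_coeff_derivative_ne_zero {f : R⟦X⟧} {d : ℕ}
    (h : coeff d (d⁄dX R f) ≠ 0) : coeff (d + 1) f ≠ 0 := by
  rw [coeff_derivative] at h
  exact left_ne_zero_of_mul h

theorem add_one_mem_of_coeff_mul_derivative_ne_zero {M : AddSubmonoid ℕ} {f g : R⟦X⟧}
    (hf : ∀ d, coeff d f ≠ 0 → d ∈ M) (hg : ∀ d, coeff d g ≠ 0 → d ∈ M) {d : ℕ}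
    (h : coeff d (f * d⁄dX R g) ≠ 0) : d + 1 ∈ M := by
  obtain ⟨i, j, rfl, hi, hj⟩ := exists_coeff_ne_zero_of_coeff_mul_ne_zero h
  rw [add_assoc]
  exact M.add_mem (hf i hi) (hg (j + 1) (coeff_succ_ne_zero_of_coeff_derivative_ne_zero hj))

end Support

section Antiderivative

variable {k : Type*} [Field k]

noncomputable def antiderivative (f : k⟦X⟧) : k⟦X⟧ :=
  X * mk fun d => coeff d f / (d + 1)

theorem coeff_succ_antiderivative (f : k⟦X⟧) (d : ℕ) :
    coeff (d + 1) (antiderivative f) = coeff d f / (d + 1) := by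
  rw [antiderivative, coeff_succ_X_mul, coeff_mk]

theorem derivative_antiderivative [CharZero k] (f : k⟦X⟧) :
    d⁄dX k (antiderivative f) = f := by
  ext d
  rw [coeff_derivative, coeff_succ_antiderivative]
  exact div_mul_cancel₀ _ (Nat.cast_add_one_ne_zero d)

theorem mem_of_coeff_antiderivative_ne_zero {M : AddSubmonoid ℕ} {f : k⟦X⟧}
    (hf : ∀ d, coeff d f ≠ 0 → d + 1 ∈ M) :
    ∀ d, coeff d (antiderivative f) ≠ 0 → d ∈ M
  | 0, _ => M.zero_mem
  | d + 1, h => hf d (div_ne_zero_iff.mp (by rwa [← coeff_succ_antiderivative])).1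

theorem exists_derivative_eq_mul_derivative [CharZero k] {M : AddSubmonoid ℕ}
    {R' : Subalgebra k k⟦X⟧} (hR' : ∀ f, f ∈ R' ↔ ∀ d, coeff d f ≠ 0 → d ∈ M)
    {a b : k⟦X⟧} (ha : a ∈ R') (hb : b ∈ R') :
    ∃ c ∈ R', d⁄dX k c = a * d⁄dX k b := by
  refine ⟨antiderivative (a * d⁄dX k b), (hR' _).mpr ?_, derivative_antiderivative _⟩
  exact mem_of_coeff_antiderivative_ne_zero fun _ =>
    add_one_mem_of_coeff_mul_derivative_ne_zero ((hR' a).mp ha) ((hR' b).mp hb)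

end Antiderivative

end PowerSeries

theorem semigroupRing_differentials_exact_general
    (k : Type*) [Field k] [CharZero k]
    (r : ℕ) (n : Fin r → ℕ)
    (R' : Subalgebra k (PowerSeries k))
    (hR' : ∀ f : PowerSeries k, f ∈ R' ↔
      ∀ d : ℕ, PowerSeries.coeff d f ≠ 0 → d ∈ AddSubmonoid.closure (Set.range n)) :
    Submodule.span k {y : PowerSeries k | ∃ a ∈ R', ∃ b ∈ R', y = a * formalDeriv k b}
      = (Subalgebra.toSubmodule R').map (formalDeriv k) := by
  refine le_antisymm (Submodule.span_le.mpr ?_) ?_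
  · rintro _ ⟨a, ha, b, hb, rfl⟩
    exact exists_derivative_eq_mul_derivative hR' ha hb
  · rintro _ ⟨b, hb, rfl⟩
    exact Submodule.subset_span ⟨1, one_mem R', b, hb, (one_mul _).symm⟩

/-- Let `R' = k⟦t^{n₁},…,t^{n_r}⟧ ⊆ k⟦t⟧` be a semigroup ring over a field `k`
of characteristic zero (the subring of power series supported on the numerical semigroup
generated by `n₁ < … < n_r`).  Then the `R'`-submodule `R'·D(R')` of `S·Dt` generated by
the derivatives of elements of `R'` consists of exact differentials: `R'·D(R') = D(R')`. -/
theorem semigroupRing_differentials_exact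
    (k : Type*) [Field k] [CharZero k]
    (r : ℕ) (n : Fin r → ℕ) (hmono : StrictMono n) (hpos : ∀ i, 0 < n i)
    (R' : Subalgebra k (PowerSeries k))
    (hR' : ∀ f : PowerSeries k, f ∈ R' ↔
      ∀ d : ℕ, PowerSeries.coeff d f ≠ 0 → d ∈ AddSubmonoid.closure (Set.range n)) :
    Submodule.span k {y : PowerSeries k | ∃ a ∈ R', ∃ b ∈ R', y = a * formalDeriv k b}
      = (Subalgebra.toSubmodule R').map (formalDeriv k) :=
  semigroupRing_differentials_exact_general k r n R' hR'
end

section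
/- Let k be a field of characteristic zero, S = k[[t]], and R' = k[[t^{n₁},…,t^{n_r}]] a semigroup ring with k ⊆ R' ⊆ S. Then S·D(S)/R'·D(R') is isomorphic as a k-vector space to S/R'; in particular dim_k(S·DS/R'·DR') = dim_k(S/R'). -/
open PowerSeries

/-- The `k`-subspace `A·D(B)` of `S·Dt = S` spanned by the products `a·Db`, `a ∈ A`, `b ∈ B`. -/
noncomputable def mulDeriv (k : Type*) [CommRing k]
    (A B : Set (PowerSeries k)) : Submodule k (PowerSeries k) :=
  Submodule.span k {y : PowerSeries k | ∃ a ∈ A, ∃ b ∈ B, y = a * formalDeriv k b}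

/-! In characteristic zero every power series has an antiderivative, so `D` maps `S` onto
`S·DS`. Conversely, a monomial of `a·Db` with `a, b ∈ R'` has exponent `m + (m' - 1)` with
`m, m'` in the semigroup, i.e. one less than a semigroup element; so if `Df ∈ R'·DR'` then every
nonconstant exponent of `f` lies in the semigroup, and so does the constant one, `0`. Hence
`D⁻¹(R'·DR') = R'` and `D` induces `S/R' ≃ S·DS/R'·DR'`. -/

noncomputable def Submodule.quotientComapEquivOfSurjective {R M M' : Type*} [Ring R]
    [AddCommGroup M] [AddCommGroup M'] [Module R M] [Module R M'] (f : M →ₗ[R] M')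
    (hf : Function.Surjective f) (N : Submodule R M') : (M ⧸ N.comap f) ≃ₗ[R] M' ⧸ N :=
  (Submodule.quotEquivOfEq _ _ (by rw [LinearMap.ker_comp, Submodule.ker_mkQ])).trans
    ((N.mkQ ∘ₗ f).quotKerEquivOfSurjective (N.mkQ_surjective.comp hf))

namespace PowerSeries

variable {R : Type*} [CommRing R]

theorem derivative_surjective [Algebra ℚ R] : Function.Surjective (d⁄dX R) := by
  intro f
  -- at `n = 0` the junk value `(0 : ℚ)⁻¹ = 0` gives the constant term `0`
  refine ⟨mk fun n => (n : ℚ)⁻¹ • coeff (n - 1) f, ?_⟩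
  ext n
  rw [coeff_derivative, coeff_mk, Nat.add_sub_cancel, Algebra.smul_def, mul_right_comm,
    ← Nat.cast_succ, ← map_natCast (algebraMap ℚ R), ← map_mul,
    inv_mul_cancel₀ (Nat.cast_ne_zero.mpr n.succ_ne_zero), map_one, one_mul]

variable (R) in
def supported (T : Set ℕ) : Submodule R R⟦X⟧ where
  carrier := {f | ∀ d ∉ T, coeff d f = 0}
  add_mem' hf hg d hd := by simp [hf d hd, hg d hd]
  zero_mem' _ _ := by simp
  smul_mem' c f hf d hd := by simp [hf d hd]

theorem mem_supported {T : Set ℕ} {f : R⟦X⟧} : f ∈ supported R T ↔ ∀ d ∉ T, coeff d f = 0 :=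
  Iff.rfl

theorem mul_mem_supported {A B C : Set ℕ} {f g : R⟦X⟧} (hf : f ∈ supported R A)
    (hg : g ∈ supported R B) (hABC : ∀ a ∈ A, ∀ b ∈ B, a + b ∈ C) :
    f * g ∈ supported R C := by
  intro d hd
  rw [coeff_mul]
  refine Finset.sum_eq_zero fun p hp => ?_
  rw [Finset.HasAntidiagonal.mem_antidiagonal] at hp
  by_cases hpA : p.1 ∈ A
  · by_cases hpB : p.2 ∈ B
    · exact absurd (hp ▸ hABC _ hpA _ hpB) hd
    · rw [hg _ hpB, mul_zero]
  · rw [hf _ hpA, zero_mul]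

theorem derivative_mem_supported {T : Set ℕ} {f : R⟦X⟧} (hf : f ∈ supported R T) :
    d⁄dX R f ∈ supported R ((· + 1) ⁻¹' T) := fun e he => by
  rw [coeff_derivative, hf _ he, zero_mul]

theorem mem_supported_of_derivative_mem [IsAddTorsionFree R] {T : Set ℕ} (hT : 0 ∈ T)
    {f : R⟦X⟧} (hf : d⁄dX R f ∈ supported R ((· + 1) ⁻¹' T)) : f ∈ supported R T := by
  intro d hd
  obtain ⟨e, rfl⟩ := Nat.exists_eq_succ_of_ne_zero (ne_of_mem_of_not_mem hT hd).symm
  have he := hf e hd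
  rw [coeff_derivative, ← Nat.cast_succ, mul_comm, ← nsmul_eq_mul, nsmul_eq_zero_iff] at he
  exact he.resolve_right e.succ_ne_zero

end PowerSeries

section SemigroupRing

variable {k : Type*} [CommRing k] {M : AddSubmonoid ℕ} {R' : Subalgebra k k⟦X⟧}

theorem mulDeriv_le_supported (hR' : Subalgebra.toSubmodule R' = supported k M) :
    mulDeriv k R' R' ≤ supported k ((· + 1) ⁻¹' M) := by
  refine Submodule.span_le.mpr ?_
  rintro _ ⟨a, ha, b, hb, rfl⟩
  have ha : a ∈ supported k M := hR' ▸ ha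
  have hb : b ∈ supported k M := hR' ▸ hb
  refine mul_mem_supported ha (derivative_mem_supported hb) ?_
  intro i hi j hj
  simpa [add_assoc] using M.add_mem hi hj

theorem comap_formalDeriv_mulDeriv [IsAddTorsionFree k]
    (hR' : Subalgebra.toSubmodule R' = supported k M) :
    (mulDeriv k R' R').comap (formalDeriv k) = Subalgebra.toSubmodule R' := by
  refine le_antisymm (fun f hf => ?_) (fun f hf => ?_)
  · rw [hR']
    exact mem_supported_of_derivative_mem M.zero_mem (mulDeriv_le_supported hR' hf)
  · exact Submodule.subset_span ⟨1, R'.one_mem, f, hf, (one_mul _).symm⟩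

end SemigroupRing

theorem semigroupRing_SDS_mod_RDR_iso_S_mod_R_general
    (k : Type*) [Field k] [CharZero k]
    (r : ℕ) (n : Fin r → ℕ)
    (R' : Subalgebra k (PowerSeries k))
    (hR' : ∀ f : PowerSeries k, f ∈ R' ↔
      ∀ d : ℕ, PowerSeries.coeff (R := k) d f ≠ 0 → d ∈ AddSubmonoid.closure (Set.range n)) :
    Nonempty
      ((↥(mulDeriv k Set.univ Set.univ) ⧸
          (mulDeriv k (R' : Set (PowerSeries k)) (R' : Set (PowerSeries k))).comap
            (mulDeriv k Set.univ Set.univ).subtype)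
        ≃ₗ[k] (PowerSeries k ⧸ Subalgebra.toSubmodule R'))
    ∧ Module.rank k
        (↥(mulDeriv k Set.univ Set.univ) ⧸
          (mulDeriv k (R' : Set (PowerSeries k)) (R' : Set (PowerSeries k))).comap
            (mulDeriv k Set.univ Set.univ).subtype)
      = Module.rank k (PowerSeries k ⧸ Subalgebra.toSubmodule R') := by
  set SDS := mulDeriv k Set.univ Set.univ
  have hR'_eq : Subalgebra.toSubmodule R' = supported k (AddSubmonoid.closure (Set.range n)) := by
    ext f
    simpa [mem_supported, not_imp_comm] using hR' f
  have hD_mem : ∀ f, formalDeriv k f ∈ SDS := fun f =>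
    Submodule.subset_span ⟨1, trivial, f, trivial, (one_mul _).symm⟩
  let D : k⟦X⟧ →ₗ[k] SDS := (formalDeriv k).codRestrict SDS hD_mem
  have hD_surj : Function.Surjective D := fun g =>
    (derivative_surjective g.1).imp fun f hf => Subtype.ext hf
  have hker : ((mulDeriv k R' R').comap SDS.subtype).comap D = Subalgebra.toSubmodule R' := by
    rw [← Submodule.comap_comp, LinearMap.subtype_comp_codRestrict,
      comap_formalDeriv_mulDeriv hR'_eq]
  let e := ((Submodule.quotEquivOfEq _ _ hker).symm.trans
    (Submodule.quotientComapEquivOfSurjective D hD_surj _)).symm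
  exact ⟨⟨e⟩, e.rank_eq⟩

/-- For a semigroup ring `R' = k⟦t^{n₁},…,t^{n_r}⟧ ⊆ S = k⟦t⟧` over a field of
characteristic zero, `S·D(S)/R'·D(R')` is isomorphic as a `k`-vector space to `S/R'`;
in particular `dim_k (S·DS/R'·DR') = dim_k (S/R')`. -/
theorem semigroupRing_SDS_mod_RDR_iso_S_mod_R
    (k : Type*) [Field k] [CharZero k]
    (r : ℕ) (n : Fin r → ℕ) (hmono : StrictMono n) (hpos : ∀ i, 0 < n i)
    (R' : Subalgebra k (PowerSeries k))
    (hR' : ∀ f : PowerSeries k, f ∈ R' ↔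
      ∀ d : ℕ, PowerSeries.coeff (R := k) d f ≠ 0 → d ∈ AddSubmonoid.closure (Set.range n)) :
    Nonempty
      ((↥(mulDeriv k Set.univ Set.univ) ⧸
          (mulDeriv k (R' : Set (PowerSeries k)) (R' : Set (PowerSeries k))).comap
            (mulDeriv k Set.univ Set.univ).subtype)
        ≃ₗ[k] (PowerSeries k ⧸ Subalgebra.toSubmodule R'))
    ∧ Module.rank k
        (↥(mulDeriv k Set.univ Set.univ) ⧸
          (mulDeriv k (R' : Set (PowerSeries k)) (R' : Set (PowerSeries k))).comap
            (mulDeriv k Set.univ Set.univ).subtype)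
      = Module.rank k (PowerSeries k ⧸ Subalgebra.toSubmodule R') :=
  semigroupRing_SDS_mod_RDR_iso_S_mod_R_general k r n R' hR'
end
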